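/- arXiv:1007.4896 — 3 statements merged into one kernel-verified Lean document; each statement's English description precedes it below -/
import Mathlib

section
/- The bracket on the morphism space End⁰ ⊕ End¹ of gl(𝕍), [(A,φ),(B,ψ)] := ([A,B], [A,ψ] − [B,φ] + [φ,ψ]_δ), makes gl(𝕍) a strict Lie 2-algebra: the bracket is bilinear and skew-symmetric; it preserves source and target, i.e. s[(A,φ),(B,ψ)] = [A,B] and t[(A,φ),(B,ψ)] = [t(A,φ), t(B,ψ)] (equivalently δ([A,ψ]) = [A, δψ] and δ([φ,ψ]_δ) = [δφ, δψ]); it preserves vertical composition of composable pairs; and it satisfies the Jacobi identity on End⁰ ⊕ End¹. -/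
open LinearMap

noncomputable section

namespace Omni

variable {V₀ V₁ : Type*}
  [AddCommGroup V₀] [Module ℝ V₀] [AddCommGroup V₁] [Module ℝ V₁]

variable (d : V₁ →ₗ[ℝ] V₀)

/-- `End⁰`: pairs `(A₀, A₁)` of endomorphisms with `A₀ ∘ d = d ∘ A₁`. -/
def End0 : Submodule ℝ ((V₀ →ₗ[ℝ] V₀) × (V₁ →ₗ[ℝ] V₁)) where
  carrier := {A | A.1 ∘ₗ d = d ∘ₗ A.2}
  add_mem' := by
    intro a b ha hb
    simp only [Set.mem_setOf_eq] at *
    simp [add_comp, comp_add, ha, hb]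
  zero_mem' := by
    simp only [Set.mem_setOf_eq]
    simp
  smul_mem' := by
    intro c a ha
    simp only [Set.mem_setOf_eq] at *
    simp [smul_comp, comp_smul, ha]

lemma mem_End0 {A : (V₀ →ₗ[ℝ] V₀) × (V₁ →ₗ[ℝ] V₁)} :
    A ∈ End0 d ↔ A.1 ∘ₗ d = d ∘ₗ A.2 := Iff.rfl

/-- Morphism space of `gl(𝕍)`:  `End⁰ ⊕ End¹`. -/
abbrev Gl := ↥(End0 d) × (V₀ →ₗ[ℝ] V₁)

/-- Morphism space of the omni-Lie 2-algebra `gl(𝕍) ⊕ 𝕍`. -/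
abbrev E := Gl d × (V₀ × V₁)

/-- `δ : End¹ → End⁰`, `δφ = (d∘φ, φ∘d)`. -/
def δm (φ : V₀ →ₗ[ℝ] V₁) : End0 d :=
  ⟨(d ∘ₗ φ, φ ∘ₗ d), by
    rw [mem_End0]
    exact (comp_assoc _ _ _).symm⟩

/-- commutator bracket on `End⁰`. -/
def bkt0 (A B : End0 d) : End0 d :=
  ⟨(A.1.1 ∘ₗ B.1.1 - B.1.1 ∘ₗ A.1.1, A.1.2 ∘ₗ B.1.2 - B.1.2 ∘ₗ A.1.2), by
    have hA : A.1.1 ∘ₗ d = d ∘ₗ A.1.2 := A.2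
    have hB : B.1.1 ∘ₗ d = d ∘ₗ B.1.2 := B.2
    rw [mem_End0]
    have ha : ∀ x, A.1.1 (d x) = d (A.1.2 x) := fun x => LinearMap.congr_fun hA x
    have hb : ∀ x, B.1.1 (d x) = d (B.1.2 x) := fun x => LinearMap.congr_fun hB x
    ext m
    simp [ha, hb]⟩

/-- `[A,φ] = A₁ ∘ φ - φ ∘ A₀` for `A ∈ End⁰`, `φ ∈ End¹`. -/
def bktAφ (A : End0 d) (φ : V₀ →ₗ[ℝ] V₁) : V₀ →ₗ[ℝ] V₁ :=
  A.1.2 ∘ₗ φ - φ ∘ₗ A.1.1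

/-- `[φ,ψ]_δ = φ∘d∘ψ - ψ∘d∘φ`. -/
def bktδ (φ ψ : V₀ →ₗ[ℝ] V₁) : V₀ →ₗ[ℝ] V₁ :=
  φ ∘ₗ d ∘ₗ ψ - ψ ∘ₗ d ∘ₗ φ

/-- bracket on the morphism space `End⁰ ⊕ End¹` of `gl(𝕍)`. -/
def bkt (X Y : Gl d) : Gl d :=
  (bkt0 d X.1 Y.1, bktAφ d X.1 Y.2 - bktAφ d Y.1 X.2 + bktδ d X.2 Y.2)

/-- action of `gl(𝕍)` on `𝕍`:  `(A,φ)·(u,m) = (A₀u, A₁m + φ(u+dm))`. -/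
def act (X : Gl d) (ξ : V₀ × V₁) : V₀ × V₁ :=
  (X.1.1.1 ξ.1, X.1.1.2 ξ.2 + X.2 (ξ.1 + d ξ.2))

/-- the `𝕍`-valued pairing on `E`. -/
def pairE (e₁ e₂ : E d) : V₀ × V₁ :=
  (2⁻¹ : ℝ) • (act d e₁.1 e₂.2 + act d e₂.1 e₁.2)

/-- pairing at the level of objects. -/
def pairObj (x y : (End0 d) × V₀) : V₀ :=
  (2⁻¹ : ℝ) • (x.1.1.1 y.2 + y.1.1.1 x.2)

/-- the Courant bracket on `E`. -/
def courant (e₁ e₂ : E d) : E d :=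
  (bkt d e₁.1 e₂.1, (2⁻¹ : ℝ) • (act d e₁.1 e₂.2 - act d e₂.1 e₁.2))

/-- Courant bracket at the level of objects. -/
def courantObj (x y : (End0 d) × V₀) : (End0 d) × V₀ :=
  (bkt0 d x.1 y.1, (2⁻¹ : ℝ) • (x.1.1.1 y.2 - y.1.1.1 x.2))

/-- the Dorfman bracket on `E`. -/
def dorfman (e₁ e₂ : E d) : E d :=
  (bkt d e₁.1 e₂.1, act d e₁.1 e₂.2)

/-- source of a morphism of `gl(𝕍) ⊕ 𝕍`. -/
def sE (e : E d) : (End0 d) × V₀ := (e.1.1, e.2.1)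

/-- target of a morphism of `gl(𝕍) ⊕ 𝕍`. -/
def tE (e : E d) : (End0 d) × V₀ := (e.1.1 + δm d e.1.2, e.2.1 + d e.2.2)

/-- vertical composition of morphisms of `gl(𝕍) ⊕ 𝕍`. -/
def compE (e e' : E d) : E d := ((e.1.1, e.1.2 + e'.1.2), (e.2.1, e.2.2 + e'.2.2))

/-- vertical composition of morphisms of `𝕍`. -/
def compV (x y : V₀ × V₁) : V₀ × V₁ := (x.1, x.2 + y.2)

/-- orthogonal complement w.r.t. the `𝕍`-valued pairing. -/
def perp (L : Set (E d)) : Set (E d) := {e | ∀ l ∈ L, pairE d e l = 0}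

/-- bilinear functor data `(F₀, F_a, F_b)` for `𝕍`. -/
structure BilinData where
  F0 : V₀ →ₗ[ℝ] V₀ →ₗ[ℝ] V₀
  Fa : V₀ →ₗ[ℝ] V₁ →ₗ[ℝ] V₁
  Fb : V₁ →ₗ[ℝ] V₀ →ₗ[ℝ] V₁
  ha : ∀ u n, d (Fa u n) = F0 u (d n)
  hb : ∀ m v, d (Fb m v) = F0 (d m) v
  hc : ∀ m n, Fa (d m) n = Fb m (d n)

/-- `ad_F (u,m) = ((F₀(u,·), F_a(u,·)), F_b(m,·))`. -/
def adF (F : BilinData d) (ξ : V₀ × V₁) : Gl d :=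
  (⟨(F.F0 ξ.1, F.Fa ξ.1), by
      rw [mem_End0]
      ext n
      exact (F.ha ξ.1 n).symm⟩, F.Fb ξ.2)

/-- the graph `G_F = {(ad_F ξ, ξ)}`. -/
def graphF (F : BilinData d) : Set (E d) := {e | ∃ ξ : V₀ × V₁, e = (adF d F ξ, ξ)}

/-- an isomorphism `μ = (μ₀, μ₁, μ₂)` from the Lie 2-algebra `gl(𝕍)` to itself. -/
structure GlIso where
  μ0 : (End0 d) ≃ₗ[ℝ] (End0 d)
  μ1 : (Gl d) ≃ₗ[ℝ] (Gl d)
  hs : ∀ X : Gl d, (μ1 X).1 = μ0 X.1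
  ht : ∀ X : Gl d, (μ1 X).1 + δm d (μ1 X).2 = μ0 (X.1 + δm d X.2)
  hid : ∀ A : End0 d, μ1 (A, 0) = (μ0 A, 0)
  hcomp : ∀ (A : End0 d) (φ φ' : V₀ →ₗ[ℝ] V₁),
    μ1 (A, φ + φ') = ((μ1 (A, φ)).1, (μ1 (A, φ)).2 + (μ1 (A + δm d φ, φ')).2)
  μ2 : (End0 d) →ₗ[ℝ] (End0 d) →ₗ[ℝ] Gl d
  hskew : ∀ A B, μ2 A B = - μ2 B A
  hs2 : ∀ A B, (μ2 A B).1 = μ0 (bkt0 d A B)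
  ht2 : ∀ A B, (μ2 A B).1 + δm d (μ2 A B).2 = bkt0 d (μ0 A) (μ0 B)
  hnat : ∀ (A B : End0 d) (φ ψ : V₀ →ₗ[ℝ] V₁),
    (μ2 A B).2 + (bkt d (μ1 (A, φ)) (μ1 (B, ψ))).2
      = (μ1 (bkt d (A, φ) (B, ψ))).2 + (μ2 (A + δm d φ) (B + δm d ψ)).2
  hcoh : ∀ A B C : End0 d,
    (μ2 (bkt0 d A B) C).2 + (bkt d (μ2 A B) ((μ0 C, 0) : Gl d)).2
      = (μ2 A (bkt0 d B C)).2 + (μ2 B (bkt0 d C A)).2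
        + (bkt d ((μ0 A, 0) : Gl d) (μ2 B C)).2
        + (bkt d ((μ0 B, 0) : Gl d) (μ2 C A)).2

/-- the `μ`-twisted pairing on `E`. -/
def pairμ (μ : GlIso d) (e₁ e₂ : E d) : V₀ × V₁ :=
  (2⁻¹ : ℝ) • (act d (μ.μ1 e₁.1) e₂.2 + act d (μ.μ1 e₂.1) e₁.2)

/-- the `μ`-twisted Courant bracket on `E`. -/
def courantμ (μ : GlIso d) (e₁ e₂ : E d) : E d :=
  (bkt d e₁.1 e₂.1, (2⁻¹ : ℝ) • (act d (μ.μ1 e₁.1) e₂.2 - act d (μ.μ1 e₂.1) e₁.2))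

/-- orthogonal complement w.r.t. the `μ`-twisted pairing. -/
def perpμ (μ : GlIso d) (L : Set (E d)) : Set (E d) := {e | ∀ l ∈ L, pairμ d μ e l = 0}

/-- the `μ`-twisted Dorfman bracket at the level of objects. -/
def dorfObjμ (μ : GlIso d) (x y : (End0 d) × V₀) : (End0 d) × V₀ :=
  (bkt0 d x.1 y.1, (μ.μ0 x.1).1.1 y.2)

end Omni

end

/-!
The map `X ↦ act d X` embeds `End⁰ ⊕ End¹` linearly and injectively into `End(V₀ ⊕ V₁)`, and it
turns the bracket into the commutator of endomorphisms. Bilinearity, skew-symmetry and the Jacobi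
identity are therefore inherited from the Lie algebra `End(V₀ ⊕ V₁)`. Compatibility with source,
target and vertical composition comes from two identities: `δ` intertwines the brackets, and
`[δφ, ψ] = [φ, ψ]_δ`.
-/

attribute [local instance] LieRing.ofAssociativeRing

section PullbackBracket

variable {R M L : Type*} [CommRing R] [AddCommGroup M] [Module R M] [LieRing L] [LieAlgebra R L]
  {f : M →ₗ[R] L} {b : M → M → M}

namespace Function.Injective

theorem bracket_add_left (hf : Injective f) (hb : ∀ x y, f (b x y) = ⁅f x, f y⁆)
    (x x' y : M) : b (x + x') y = b x y + b x' y :=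
  hf <| by simp only [hb, map_add, add_lie]

theorem bracket_add_right (hf : Injective f) (hb : ∀ x y, f (b x y) = ⁅f x, f y⁆)
    (x y y' : M) : b x (y + y') = b x y + b x y' :=
  hf <| by simp only [hb, map_add, lie_add]

theorem bracket_smul_left (hf : Injective f) (hb : ∀ x y, f (b x y) = ⁅f x, f y⁆)
    (c : R) (x y : M) : b (c • x) y = c • b x y :=
  hf <| by simp only [hb, map_smul, smul_lie]

theorem bracket_smul_right (hf : Injective f) (hb : ∀ x y, f (b x y) = ⁅f x, f y⁆)
    (c : R) (x y : M) : b x (c • y) = c • b x y :=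
  hf <| by simp only [hb, map_smul, lie_smul]

theorem bracket_skew (hf : Injective f) (hb : ∀ x y, f (b x y) = ⁅f x, f y⁆)
    (x y : M) : b x y = -b y x :=
  hf <| by simp only [hb, map_neg, lie_skew]

theorem bracket_jacobi (hf : Injective f) (hb : ∀ x y, f (b x y) = ⁅f x, f y⁆)
    (x y z : M) : b (b x y) z + b (b y z) x + b (b z x) y = 0 :=
  hf <| by
    have lie_lie_eq (u v w : L) : ⁅⁅u, v⁆, w⁆ = -⁅w, ⁅u, v⁆⁆ := (lie_skew _ _).symm
    simp only [hb, map_add, map_zero, lie_lie_eq]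
    calc _ = -(⁅f x, ⁅f y, f z⁆⁆ + ⁅f y, ⁅f z, f x⁆⁆ + ⁅f z, ⁅f x, f y⁆⁆) := by abel
      _ = 0 := by rw [lie_jacobi, neg_zero]

end Function.Injective

end PullbackBracket

namespace Omni

variable {V₀ V₁ : Type*} [AddCommGroup V₀] [Module ℝ V₀] [AddCommGroup V₁] [Module ℝ V₁]
  {d : V₁ →ₗ[ℝ] V₀}

theorem End0.comm_apply (A : End0 d) (m : V₁) : A.1.1 (d m) = d (A.1.2 m) :=
  LinearMap.congr_fun A.2 m

theorem bkt0_eq_lie (A B : End0 d) :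
    (End0 d).subtype (bkt0 d A B) = ⁅(End0 d).subtype A, (End0 d).subtype B⁆ :=
  rfl

theorem bkt0_add_left (A A' B : End0 d) : bkt0 d (A + A') B = bkt0 d A B + bkt0 d A' B :=
  (End0 d).injective_subtype.bracket_add_left bkt0_eq_lie A A' B

theorem bkt0_add_right (A B B' : End0 d) : bkt0 d A (B + B') = bkt0 d A B + bkt0 d A B' :=
  (End0 d).injective_subtype.bracket_add_right bkt0_eq_lie A B B'

theorem bkt0_skew (A B : End0 d) : bkt0 d A B = -bkt0 d B A :=
  (End0 d).injective_subtype.bracket_skew bkt0_eq_lie A B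

variable (d) in
def glToEnd : Gl d →ₗ[ℝ] Module.End ℝ (V₀ × V₁) :=
  LinearMap.mk₂ ℝ (act d)
    (fun X Y ξ => Prod.ext (by simp [act]) <| by
      simp only [act, Prod.snd_add, Submodule.coe_add, Prod.fst_add, LinearMap.add_apply]; abel)
    (fun c X ξ => Prod.ext (by simp [act]) (by simp [act]))
    (fun X ξ η => Prod.ext (by simp [act]) <| by
      simp only [act, Prod.fst_add, Prod.snd_add, map_add]; abel)
    (fun c X ξ => Prod.ext (by simp [act]) (by simp [act]))

theorem act_bkt (X Y : Gl d) (ξ : V₀ × V₁) :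
    act d (bkt d X Y) ξ = act d X (act d Y ξ) - act d Y (act d X ξ) := by
  refine Prod.ext (by simp [act, bkt, bkt0]) ?_
  simp only [act, bkt, bkt0, bktAφ, bktδ, LinearMap.sub_apply, LinearMap.add_apply, coe_comp,
    Function.comp_apply, map_add, End0.comm_apply, Prod.mk_sub_mk]
  abel

theorem glToEnd_bkt (X Y : Gl d) : glToEnd d (bkt d X Y) = ⁅glToEnd d X, glToEnd d Y⁆ :=
  LinearMap.ext (act_bkt X Y)

theorem glToEnd_injective : Function.Injective (glToEnd d) := by
  rw [← LinearMap.ker_eq_bot, LinearMap.ker_eq_bot']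
  intro X hX
  have h (u : V₀) (m : V₁) : act d X (u, m) = 0 := LinearMap.congr_fun hX (u, m)
  have hA₀ (u : V₀) : X.1.1.1 u = 0 := congrArg Prod.fst (h u 0)
  have hφ (u : V₀) : X.2 u = 0 := by simpa [act] using congrArg Prod.snd (h u 0)
  have hA₁ (m : V₁) : X.1.1.2 m = 0 := by simpa [act, hφ] using congrArg Prod.snd (h 0 m)
  exact Prod.ext (Subtype.ext (Prod.ext (LinearMap.ext hA₀) (LinearMap.ext hA₁))) (LinearMap.ext hφ)

theorem bkt_add_left (X X' Y : Gl d) : bkt d (X + X') Y = bkt d X Y + bkt d X' Y :=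
  glToEnd_injective.bracket_add_left glToEnd_bkt X X' Y

theorem bkt_add_right (X Y Y' : Gl d) : bkt d X (Y + Y') = bkt d X Y + bkt d X Y' :=
  glToEnd_injective.bracket_add_right glToEnd_bkt X Y Y'

theorem bkt_smul_left (c : ℝ) (X Y : Gl d) : bkt d (c • X) Y = c • bkt d X Y :=
  glToEnd_injective.bracket_smul_left glToEnd_bkt c X Y

theorem bkt_smul_right (c : ℝ) (X Y : Gl d) : bkt d X (c • Y) = c • bkt d X Y :=
  glToEnd_injective.bracket_smul_right glToEnd_bkt c X Y

theorem bkt_skew (X Y : Gl d) : bkt d X Y = -bkt d Y X :=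
  glToEnd_injective.bracket_skew glToEnd_bkt X Y

theorem bkt_jacobi (X Y Z : Gl d) :
    bkt d (bkt d X Y) Z + bkt d (bkt d Y Z) X + bkt d (bkt d Z X) Y = 0 :=
  glToEnd_injective.bracket_jacobi glToEnd_bkt X Y Z

theorem δm_add (φ ψ : V₀ →ₗ[ℝ] V₁) : δm d (φ + ψ) = δm d φ + δm d ψ :=
  Subtype.ext <| Prod.ext (comp_add _ _ _) (add_comp _ _ _)

theorem δm_sub (φ ψ : V₀ →ₗ[ℝ] V₁) : δm d (φ - ψ) = δm d φ - δm d ψ :=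
  Subtype.ext <| Prod.ext (comp_sub _ _ _) (sub_comp _ _ _)

theorem δm_bktAφ (A : End0 d) (ψ : V₀ →ₗ[ℝ] V₁) : δm d (bktAφ d A ψ) = bkt0 d A (δm d ψ) := by
  refine Subtype.ext (Prod.ext ?_ ?_) <;> ext <;> simp [δm, bkt0, bktAφ, End0.comm_apply]

theorem δm_bktδ (φ ψ : V₀ →ₗ[ℝ] V₁) : δm d (bktδ d φ ψ) = bkt0 d (δm d φ) (δm d ψ) := by
  refine Subtype.ext (Prod.ext ?_ ?_) <;> ext <;> simp [δm, bkt0, bktδ]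

theorem bktAφ_δm (φ ψ : V₀ →ₗ[ℝ] V₁) : bktAφ d (δm d φ) ψ = bktδ d φ ψ := by
  ext; simp [δm, bktAφ, bktδ]

theorem bktAφ_add_left (A B : End0 d) (ψ : V₀ →ₗ[ℝ] V₁) :
    bktAφ d (A + B) ψ = bktAφ d A ψ + bktAφ d B ψ := by
  simp only [bktAφ, Submodule.coe_add, Prod.fst_add, Prod.snd_add, add_comp, comp_add]
  abel

theorem bktAφ_add_right (A : End0 d) (φ ψ : V₀ →ₗ[ℝ] V₁) :
    bktAφ d A (φ + ψ) = bktAφ d A φ + bktAφ d A ψ := by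
  simp only [bktAφ, add_comp, comp_add]
  abel

theorem bktδ_add_left (φ φ' ψ : V₀ →ₗ[ℝ] V₁) :
    bktδ d (φ + φ') ψ = bktδ d φ ψ + bktδ d φ' ψ := by
  simp only [bktδ, add_comp, comp_add]
  abel

theorem bktδ_add_right (φ ψ ψ' : V₀ →ₗ[ℝ] V₁) :
    bktδ d φ (ψ + ψ') = bktδ d φ ψ + bktδ d φ ψ' := by
  simp only [bktδ, add_comp, comp_add]
  abel

theorem bktδ_skew (φ ψ : V₀ →ₗ[ℝ] V₁) : bktδ d φ ψ = -bktδ d ψ φ := by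
  simp only [bktδ, neg_sub]

theorem bkt_fst_add_δm_bkt_snd (X Y : Gl d) :
    (bkt d X Y).1 + δm d (bkt d X Y).2 = bkt0 d (X.1 + δm d X.2) (Y.1 + δm d Y.2) := by
  simp only [bkt, δm_add, δm_sub, δm_bktAφ, δm_bktδ, bkt0_add_left, bkt0_add_right,
    bkt0_skew (δm d X.2) Y.1]
  abel

theorem bkt_vcomp (A B : End0 d) (φ φ' ψ ψ' : V₀ →ₗ[ℝ] V₁) :
    bkt d (A, φ + φ') (B, ψ + ψ') =
      ((bkt d (A, φ) (B, ψ)).1,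
        (bkt d (A, φ) (B, ψ)).2 + (bkt d (A + δm d φ, φ') (B + δm d ψ, ψ')).2) := by
  refine Prod.ext rfl ?_
  simp only [bkt, bktAφ_add_left, bktAφ_add_right, bktδ_add_left, bktδ_add_right, bktAφ_δm,
    bktδ_skew ψ φ']
  abel

end Omni

open Omni in
theorem gl_strict_lie2_general {V₀ V₁ : Type*} [AddCommGroup V₀] [Module ℝ V₀] [AddCommGroup V₁] [Module ℝ V₁]
    (d : V₁ →ₗ[ℝ] V₀) :
    -- bilinearity
    (∀ (X X' Y : Gl d) (c : ℝ),
      bkt d (X + X') Y = bkt d X Y + bkt d X' Y ∧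
      bkt d (c • X) Y = c • bkt d X Y ∧
      bkt d Y (X + X') = bkt d Y X + bkt d Y X' ∧
      bkt d Y (c • X) = c • bkt d Y X) ∧
    -- skew-symmetry
    (∀ X Y : Gl d, bkt d X Y = - bkt d Y X) ∧
    -- source preservation: s[(A,φ),(B,ψ)] = [A,B]
    (∀ X Y : Gl d, (bkt d X Y).1 = bkt0 d X.1 Y.1) ∧
    -- δ([A,ψ]) = [A,δψ]
    (∀ (A : End0 d) (ψ : V₀ →ₗ[ℝ] V₁), δm d (bktAφ d A ψ) = bkt0 d A (δm d ψ)) ∧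
    -- δ([φ,ψ]_δ) = [δφ,δψ]
    (∀ φ ψ : V₀ →ₗ[ℝ] V₁, δm d (bktδ d φ ψ) = bkt0 d (δm d φ) (δm d ψ)) ∧
    -- target preservation: t[(A,φ),(B,ψ)] = [t(A,φ),t(B,ψ)]
    (∀ X Y : Gl d,
      (bkt d X Y).1 + δm d (bkt d X Y).2 = bkt0 d (X.1 + δm d X.2) (Y.1 + δm d Y.2)) ∧
    -- vertical composition preservation (for composable pairs)
    (∀ (A B : End0 d) (φ φ' ψ ψ' : V₀ →ₗ[ℝ] V₁),
      (bkt d (A, φ) (B, ψ)).1 + δm d (bkt d (A, φ) (B, ψ)).2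
        = (bkt d (A + δm d φ, φ') (B + δm d ψ, ψ')).1 ∧
      bkt d (A, φ + φ') (B, ψ + ψ')
        = ((bkt d (A, φ) (B, ψ)).1,
           (bkt d (A, φ) (B, ψ)).2 + (bkt d (A + δm d φ, φ') (B + δm d ψ, ψ')).2)) ∧
    -- Jacobi identity on End⁰ ⊕ End¹
    (∀ X Y Z : Gl d,
      bkt d (bkt d X Y) Z + bkt d (bkt d Y Z) X + bkt d (bkt d Z X) Y = 0) := by
  refine ⟨fun X X' Y c => ⟨bkt_add_left X X' Y, bkt_smul_left c X Y, bkt_add_right Y X X',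
    bkt_smul_right c Y X⟩, bkt_skew, fun _ _ => rfl, δm_bktAφ, δm_bktδ, bkt_fst_add_δm_bkt_snd,
    fun A B φ φ' ψ ψ' => ⟨bkt_fst_add_δm_bkt_snd (A, φ) (B, ψ), bkt_vcomp A B φ φ' ψ ψ'⟩, bkt_jacobi⟩

open Omni in
/-- The bracket on the morphism space `End⁰ ⊕ End¹` of `gl(𝕍)` makes `gl(𝕍)` a strict
Lie 2-algebra: it is bilinear, skew-symmetric, preserves source and target, preserves
vertical composition, and satisfies the Jacobi identity. -/
theorem gl_strict_lie2 {V₀ V₁ : Type*} [AddCommGroup V₀] [Module ℝ V₀] [AddCommGroup V₁] [Module ℝ V₁]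
    [FiniteDimensional ℝ V₀] [FiniteDimensional ℝ V₁]
    (d : V₁ →ₗ[ℝ] V₀) :
    -- bilinearity
    (∀ (X X' Y : Gl d) (c : ℝ),
      bkt d (X + X') Y = bkt d X Y + bkt d X' Y ∧
      bkt d (c • X) Y = c • bkt d X Y ∧
      bkt d Y (X + X') = bkt d Y X + bkt d Y X' ∧
      bkt d Y (c • X) = c • bkt d Y X) ∧
    -- skew-symmetry
    (∀ X Y : Gl d, bkt d X Y = - bkt d Y X) ∧
    -- source preservation: s[(A,φ),(B,ψ)] = [A,B]
    (∀ X Y : Gl d, (bkt d X Y).1 = bkt0 d X.1 Y.1) ∧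
    -- δ([A,ψ]) = [A,δψ]
    (∀ (A : End0 d) (ψ : V₀ →ₗ[ℝ] V₁), δm d (bktAφ d A ψ) = bkt0 d A (δm d ψ)) ∧
    -- δ([φ,ψ]_δ) = [δφ,δψ]
    (∀ φ ψ : V₀ →ₗ[ℝ] V₁, δm d (bktδ d φ ψ) = bkt0 d (δm d φ) (δm d ψ)) ∧
    -- target preservation: t[(A,φ),(B,ψ)] = [t(A,φ),t(B,ψ)]
    (∀ X Y : Gl d,
      (bkt d X Y).1 + δm d (bkt d X Y).2 = bkt0 d (X.1 + δm d X.2) (Y.1 + δm d Y.2)) ∧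
    -- vertical composition preservation (for composable pairs)
    (∀ (A B : End0 d) (φ φ' ψ ψ' : V₀ →ₗ[ℝ] V₁),
      (bkt d (A, φ) (B, ψ)).1 + δm d (bkt d (A, φ) (B, ψ)).2
        = (bkt d (A + δm d φ, φ') (B + δm d ψ, ψ')).1 ∧
      bkt d (A, φ + φ') (B, ψ + ψ')
        = ((bkt d (A, φ) (B, ψ)).1,
           (bkt d (A, φ) (B, ψ)).2 + (bkt d (A + δm d φ, φ') (B + δm d ψ, ψ')).2)) ∧
    -- Jacobi identity on End⁰ ⊕ End¹
    (∀ X Y Z : Gl d,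
      bkt d (bkt d X Y) Z + bkt d (bkt d Y Z) X + bkt d (bkt d Z X) Y = 0) :=
  gl_strict_lie2_general d
end

section
/- Given bilinear functor data (F₀, F_a, F_b) for 𝕍, the graph G_F := {(ad_F(ξ), ξ) : ξ ∈ V₀ ⊕ V₁} ⊆ E is maximal isotropic with respect to the 𝕍-valued pairing, i.e. G_F = G_F^⊥ := {e ∈ E : ⟨e, g⟩ = 0 for all g ∈ G_F}, if and only if F is skew-symmetric, i.e. F₀(u,v) = −F₀(v,u) and F_a(u,n) = −F_b(n,u) for all u,v ∈ V₀ and n ∈ V₁. -/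
open LinearMap

/-!
On the graph the pairing is `⟨(ad_F ξ, ξ), (ad_F η, η)⟩ = ½ (ad_F ξ · η + ad_F η · ξ)`, and this
vanishes for all `ξ, η` exactly when `F` is skew-symmetric: the only term not cancelled directly by
skew-symmetry is `F_a(dm, n) + F_a(dn, m)`, which vanishes because `F_a(dm, n) = F_b(m, dn)`.
Conversely, if `(X, ξ)` is orthogonal to the graph, then `X · η = -ad_F η · ξ = ad_F ξ · η` for
every `η`, and `End⁰ ⊕ End¹` acts faithfully on `𝕍`, so `X = ad_F ξ`.
-/

namespace Omni

variable {V₀ V₁ : Type*} [AddCommGroup V₀] [Module ℝ V₀] [AddCommGroup V₁] [Module ℝ V₁]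
  (d : V₁ →ₗ[ℝ] V₀)

theorem act_injective : Function.Injective (act d) := by
  intro X Y h
  have h₀ (v : V₀) : act d X (v, 0) = act d Y (v, 0) := congrFun h _
  have h₁ (n : V₁) : act d X (0, n) = act d Y (0, n) := congrFun h _
  simp only [act, map_zero, zero_add, add_zero, Prod.mk.injEq] at h₀ h₁
  have hφ : X.2 = Y.2 := LinearMap.ext fun v => (h₀ v).2
  have hA₁ (n : V₁) : X.1.1.2 n = Y.1.1.2 n := by simpa [hφ] using (h₁ n).2
  exact Prod.ext (Subtype.ext (Prod.ext (LinearMap.ext fun v => (h₀ v).1) (LinearMap.ext hA₁))) hφ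

theorem mem_perp_iff {L : Set (E d)} {e : E d} :
    e ∈ perp d L ↔ ∀ l ∈ L, act d e.1 l.2 + act d l.1 e.2 = 0 := by
  simp only [perp, pairE, Set.mem_ofPred_eq, smul_eq_zero, inv_eq_zero, two_ne_zero, false_or]

variable {d} (F : BilinData d)

theorem graphF_subset_perp_iff :
    graphF d F ⊆ perp d (graphF d F) ↔
      ∀ ξ η, act d (adF d F ξ) η + act d (adF d F η) ξ = 0 := by
  refine ⟨fun h ξ η => (mem_perp_iff d).1 (h ⟨ξ, rfl⟩) _ ⟨η, rfl⟩, ?_⟩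
  rintro h _ ⟨ξ, rfl⟩
  exact (mem_perp_iff d).2 fun _ ⟨η, hη⟩ => hη ▸ h ξ η

theorem act_adF_add_act_adF_eq_zero_iff :
    (∀ ξ η, act d (adF d F ξ) η + act d (adF d F η) ξ = 0) ↔
      (∀ u v, F.F0 u v = -F.F0 v u) ∧ ∀ u n, F.Fa u n = -F.Fb n u := by
  constructor
  · intro h
    refine ⟨fun u v => ?_, fun u n => ?_⟩
    · simpa [act, adF, add_eq_zero_iff_eq_neg] using congrArg Prod.fst (h (u, 0) (v, 0))
    · simpa [act, adF, add_eq_zero_iff_eq_neg] using congrArg Prod.snd (h (u, 0) (0, n))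
  · rintro ⟨h₀, hab⟩ ⟨u, m⟩ ⟨v, n⟩
    have hba (n : V₁) (u : V₀) : F.Fb n u = -F.Fa u n := by rw [hab, neg_neg]
    have hd : F.Fa (d m) n = -F.Fa (d n) m := by rw [F.hc, hba]
    refine Prod.ext ?_ ?_
    · simp [act, adF, h₀ u v]
    · simp only [act, adF, map_add, LinearMap.add_apply, hba, hd, Prod.snd_add, Prod.snd_zero]
      abel

theorem perp_graphF_subset_graphF
    (h : ∀ ξ η, act d (adF d F ξ) η + act d (adF d F η) ξ = 0) :
    perp d (graphF d F) ⊆ graphF d F := by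
  rintro ⟨X, ξ⟩ he
  refine ⟨ξ, Prod.ext (act_injective d (funext fun η => ?_)) rfl⟩
  have hη : act d X η + act d (adF d F η) ξ = 0 := (mem_perp_iff d).1 he _ ⟨η, rfl⟩
  exact add_right_cancel (hη.trans (h ξ η).symm)

end Omni

open Omni in
theorem graph_maximal_isotropic_iff_skew_general {V₀ V₁ : Type*} [AddCommGroup V₀] [Module ℝ V₀] [AddCommGroup V₁] [Module ℝ V₁]
    (d : V₁ →ₗ[ℝ] V₀) (F : BilinData d) :
    graphF d F = perp d (graphF d F)
      ↔ ((∀ u v : V₀, F.F0 u v = - F.F0 v u) ∧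
         (∀ (u : V₀) (n : V₁), F.Fa u n = - F.Fb n u)) := by
  rw [← act_adF_add_act_adF_eq_zero_iff]
  refine ⟨fun h => (graphF_subset_perp_iff F).1 h.subset, fun h => ?_⟩
  exact ((graphF_subset_perp_iff F).2 h).antisymm (perp_graphF_subset_graphF F h)

open Omni in
/-- The graph `G_F` of `ad_F` is maximal isotropic (`G_F = G_F^⊥`) with respect to the
`𝕍`-valued pairing if and only if `F` is skew-symmetric. -/
theorem graph_maximal_isotropic_iff_skew {V₀ V₁ : Type*} [AddCommGroup V₀] [Module ℝ V₀] [AddCommGroup V₁] [Module ℝ V₁]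
    [FiniteDimensional ℝ V₀] [FiniteDimensional ℝ V₁]
    (d : V₁ →ₗ[ℝ] V₀) (F : BilinData d) :
    graphF d F = perp d (graphF d F)
      ↔ ((∀ u v : V₀, F.F0 u v = - F.F0 v u) ∧
         (∀ (u : V₀) (n : V₁), F.Fa u n = - F.Fb n u)) :=
  graph_maximal_isotropic_iff_skew_general d F
end

section
/- Let L ⊆ E be a maximal isotropic subspace (L = L^⊥) of the omni-Lie 2-algebra gl(𝕍) ⊕ 𝕍, set 𝔇 := L ∩ (End⁰ ⊕ End¹) and let H := pr_𝕍(L) ⊆ V₀ ⊕ V₁ be the image of the projection of L to V₀ ⊕ V₁. Then 𝔇 = H⁰ := {X ∈ End⁰ ⊕ End¹ : X·ξ = 0 for all ξ ∈ H}, and there exists a linear map π : V₀ ⊕ V₁ → End⁰ ⊕ End¹ such that L = {X + π(ξ) + ξ : X ∈ 𝔇, ξ ∈ H} and π(ξ)·η = −π(η)·ξ for all ξ, η ∈ H. Moreover H ⊆ 𝔇⁰ := {η ∈ V₀ ⊕ V₁ : X·η = 0 for all X ∈ 𝔇}. -/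
open LinearMap

/-! Pairing `(X, 0)` with `(Y, ξ)` gives `½ X·ξ`, so `L = L^⊥` identifies `𝔇` with `H⁰`.
Over a field the projection `L → H` has a linear section `ξ ↦ (π ξ, ξ)`, which splits `L` as
`𝔇 ⊕ graph π`; skew-symmetry of `π` on `H` is the isotropy of this graph. -/

theorem LinearMap.exists_rightInverse_on_range {K V W : Type*} [DivisionRing K]
    [AddCommGroup V] [Module K V] [AddCommGroup W] [Module K W] (f : V →ₗ[K] W) :
    ∃ g : W →ₗ[K] V, ∀ w ∈ range f, f (g w) = w := by
  obtain ⟨h, hh⟩ := f.rangeRestrict.exists_rightInverse_of_surjective f.range_rangeRestrict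
  obtain ⟨g, hg⟩ := LinearMap.exists_extend h
  subst hg
  exact ⟨g, fun w hw => congrArg Subtype.val (LinearMap.congr_fun hh ⟨w, hw⟩)⟩

theorem Submodule.exists_linearMap_mk_mem {K M N : Type*} [DivisionRing K]
    [AddCommGroup M] [Module K M] [AddCommGroup N] [Module K N] (L : Submodule K (M × N)) :
    ∃ π : N →ₗ[K] M, ∀ ξ, (∃ Y, (Y, ξ) ∈ L) → (π ξ, ξ) ∈ L := by
  obtain ⟨g, hg⟩ := (LinearMap.snd K M N ∘ₗ L.subtype).exists_rightInverse_on_range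
  refine ⟨LinearMap.fst K M N ∘ₗ L.subtype ∘ₗ g, fun ξ ⟨Y, hY⟩ => ?_⟩
  have hsnd : ((g ξ : L) : M × N).2 = ξ := hg ξ ⟨⟨(Y, ξ), hY⟩, rfl⟩
  convert (g ξ).2 using 1
  exact Prod.ext rfl hsnd.symm

theorem Submodule.coe_eq_setOf_add_graph {R M N : Type*} [Ring R]
    [AddCommGroup M] [Module R M] [AddCommGroup N] [Module R N] (L : Submodule R (M × N))
    (π : N →ₗ[R] M) (hπ : ∀ ξ, (∃ Y, (Y, ξ) ∈ L) → (π ξ, ξ) ∈ L) :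
    (L : Set (M × N)) =
      {e | ∃ X, (X, (0 : N)) ∈ L ∧ ∃ ξ, (∃ Y, (Y, ξ) ∈ L) ∧ e = (X + π ξ, ξ)} := by
  ext ⟨Z, ξ⟩
  constructor
  · intro he
    have hξ : ∃ Y, (Y, ξ) ∈ L := ⟨Z, he⟩
    refine ⟨Z - π ξ, ?_, ξ, hξ, by simp⟩
    simpa using L.sub_mem he (hπ ξ hξ)
  · rintro ⟨X, hX, ξ, hξ, he⟩
    rw [he]
    simpa using L.add_mem hX (hπ ξ hξ)

namespace Omni

variable {V₀ V₁ : Type*} [AddCommGroup V₀] [Module ℝ V₀] [AddCommGroup V₁] [Module ℝ V₁]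
  (d : V₁ →ₗ[ℝ] V₀)

@[simp]
theorem act_zero (X : Gl d) : act d X 0 = 0 := by
  simp [act]

theorem pairE_eq_zero_iff (e₁ e₂ : E d) :
    pairE d e₁ e₂ = 0 ↔ act d e₁.1 e₂.2 + act d e₂.1 e₁.2 = 0 :=
  smul_eq_zero_iff_right (by norm_num)

variable {d} {L : Set (E d)}

theorem act_add_act_eq_zero (hL : L ⊆ perp d L) {e₁ e₂ : E d} (h₁ : e₁ ∈ L) (h₂ : e₂ ∈ L) :
    act d e₁.1 e₂.2 + act d e₂.1 e₁.2 = 0 :=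
  (pairE_eq_zero_iff d e₁ e₂).1 (hL h₁ e₂ h₂)

theorem act_eq_zero_of_mem (hL : L ⊆ perp d L) {X Y : Gl d} {ξ : V₀ × V₁}
    (hX : (X, 0) ∈ L) (hY : (Y, ξ) ∈ L) : act d X ξ = 0 := by
  simpa using act_add_act_eq_zero hL hX hY

theorem mem_of_forall_act_eq_zero (hL : perp d L ⊆ L) {X : Gl d}
    (hX : ∀ ξ : V₀ × V₁, (∃ Y : Gl d, (Y, ξ) ∈ L) → act d X ξ = 0) : (X, 0) ∈ L :=
  hL fun e he => (pairE_eq_zero_iff d _ _).2 (by simp [hX e.2 ⟨e.1, he⟩])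

end Omni

open Omni in
theorem characteristic_pair_general {V₀ V₁ : Type*} [AddCommGroup V₀] [Module ℝ V₀] [AddCommGroup V₁] [Module ℝ V₁]
    (d : V₁ →ₗ[ℝ] V₀)
    (L : Submodule ℝ (E d))
    (hmax : (L : Set (E d)) = perp d (L : Set (E d))) :
    -- 𝔇 = H⁰
    (∀ X : Gl d, ((X, (0 : V₀ × V₁)) : E d) ∈ L ↔
        ∀ ξ : V₀ × V₁, (∃ Y : Gl d, ((Y, ξ) : E d) ∈ L) → act d X ξ = 0) ∧
    -- existence of π
    (∃ π : (V₀ × V₁) →ₗ[ℝ] Gl d,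
      ((L : Set (E d)) =
        {e : E d | ∃ X : Gl d, ((X, (0 : V₀ × V₁)) : E d) ∈ L ∧
          ∃ ξ : V₀ × V₁, (∃ Y : Gl d, ((Y, ξ) : E d) ∈ L) ∧ e = (X + π ξ, ξ)}) ∧
      (∀ ξ η : V₀ × V₁, (∃ Y : Gl d, ((Y, ξ) : E d) ∈ L) →
        (∃ Y : Gl d, ((Y, η) : E d) ∈ L) →
        act d (π ξ) η = - act d (π η) ξ)) ∧
    -- H ⊆ 𝔇⁰
    (∀ η : V₀ × V₁, (∃ Y : Gl d, ((Y, η) : E d) ∈ L) →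
      ∀ X : Gl d, ((X, (0 : V₀ × V₁)) : E d) ∈ L → act d X η = 0) := by
  have hiso : (L : Set (E d)) ⊆ perp d L := hmax.le
  obtain ⟨π, hπ⟩ := L.exists_linearMap_mk_mem
  refine ⟨fun X => ⟨fun hX ξ ⟨Y, hY⟩ => act_eq_zero_of_mem hiso hX hY,
      mem_of_forall_act_eq_zero hmax.ge⟩,
    ⟨π, L.coe_eq_setOf_add_graph π hπ, fun ξ η hξ hη => ?_⟩,
    fun η ⟨Y, hY⟩ X hX => act_eq_zero_of_mem hiso hX hY⟩
  exact eq_neg_of_add_eq_zero_left (act_add_act_eq_zero hiso (hπ ξ hξ) (hπ η hη))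

open Omni in
/-- Every maximal isotropic subspace `L` of the omni-Lie 2-algebra `gl(𝕍) ⊕ 𝕍` has a
characteristic pair: with `𝔇 = L ∩ (End⁰ ⊕ End¹)` and `H = pr_𝕍(L)`, one has `𝔇 = H⁰`,
there is a linear map `π` with `L = 𝔇 ⊕ {π(ξ) + ξ : ξ ∈ H}` and
`π(ξ)·η = −π(η)·ξ` on `H`, and `H ⊆ 𝔇⁰`. -/
theorem characteristic_pair {V₀ V₁ : Type*} [AddCommGroup V₀] [Module ℝ V₀] [AddCommGroup V₁] [Module ℝ V₁]
    [FiniteDimensional ℝ V₀] [FiniteDimensional ℝ V₁]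
    (d : V₁ →ₗ[ℝ] V₀)
    (L : Submodule ℝ (E d))
    (hmax : (L : Set (E d)) = perp d (L : Set (E d))) :
    -- 𝔇 = H⁰
    (∀ X : Gl d, ((X, (0 : V₀ × V₁)) : E d) ∈ L ↔
        ∀ ξ : V₀ × V₁, (∃ Y : Gl d, ((Y, ξ) : E d) ∈ L) → act d X ξ = 0) ∧
    -- existence of π
    (∃ π : (V₀ × V₁) →ₗ[ℝ] Gl d,
      ((L : Set (E d)) =
        {e : E d | ∃ X : Gl d, ((X, (0 : V₀ × V₁)) : E d) ∈ L ∧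
          ∃ ξ : V₀ × V₁, (∃ Y : Gl d, ((Y, ξ) : E d) ∈ L) ∧ e = (X + π ξ, ξ)}) ∧
      (∀ ξ η : V₀ × V₁, (∃ Y : Gl d, ((Y, ξ) : E d) ∈ L) →
        (∃ Y : Gl d, ((Y, η) : E d) ∈ L) →
        act d (π ξ) η = - act d (π η) ξ)) ∧
    -- H ⊆ 𝔇⁰
    (∀ η : V₀ × V₁, (∃ Y : Gl d, ((Y, η) : E d) ∈ L) →
      ∀ X : Gl d, ((X, (0 : V₀ × V₁)) : E d) ∈ L → act d X η = 0) :=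
  characteristic_pair_general d L hmax
end
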